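/- Let p + q = 1 with p, q ∈ [0,1] and let 0 < γ ≤ min{√(2p), √(2q)}. Consider the OQRW on ℤ generated by B = [[1,0],[0,√(p−γ²/2)]] and C = [[0,γ],[0,√(q−γ²/2)]], with initial density matrix ρ₀ = [[a,0],[0,b]] (a + b = 1, a, b ≥ 0). Set p̃ = p − γ²/2 and q̃ = q − γ²/2. Then for all n ≥ 1 and x ∈ ℤ: p_x^{(n)} = a·δ_{x,−n} + b·γ²·Σ_{j=0}^{n−1} Σ_{l=0}^{j} C(j,l) p̃^l q̃^{j−l} δ_{x, 2(j−l+1)−n} + b·Σ_{j=0}^{n} C(n,j) p̃^j q̃^{n−j} δ_{x, n−2j}, where δ is the Kronecker delta and C(·,·) the binomial coefficient. -/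

import Mathlib

/-!
Every row of `B` and of `C` has a single nonzero entry, so the diagonal of `ρ_x^{(n)}` evolves on
its own. The `(1,1)` entry is `b` times a biased binomial walk stepping left with weight `p̃` and
right with weight `q̃`. The `(0,0)` entry is shifted one step to the left at every time and receives
`γ²` times the `(1,1)` entry of the left neighbour; summing over the time `j` of this single
`1 → 0` transition gives the double sum.
-/

open MeasureTheory Filter Matrix Finset
open scoped ComplexOrder

/-- The state of the open quantum random walk on `ℤ` generated by `B, C`
with initial density matrix `ρ₀`. -/
noncomputable def oqrwState (B C ρ₀ : Matrix (Fin 2) (Fin 2) ℂ) :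
    ℕ → ℤ → Matrix (Fin 2) (Fin 2) ℂ
  | 0, x => if x = 0 then ρ₀ else 0
  | n + 1, x =>
      B * oqrwState B C ρ₀ n (x + 1) * Bᴴ + C * oqrwState B C ρ₀ n (x - 1) * Cᴴ

theorem eq_add_sum_of_succ_eq_shift_add {M : Type*} [AddCommMonoid M] {f h : ℕ → ℤ → M}
    (hf : ∀ n x, f (n + 1) x = f n (x + 1) + h n (x - 1)) (n : ℕ) (x : ℤ) :
    f n x = f 0 (x + n) + ∑ j ∈ range n, h j (x + n - j - 2) := by
  induction n generalizing x with
  | zero => simp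
  | succ n ih =>
    rw [hf, ih, sum_range_succ, add_assoc]
    push_cast
    ring_nf

section BinomialWalk

variable {R : Type*} [CommSemiring R]

def binomialWalk (u v : R) (n : ℕ) (x : ℤ) : R :=
  ∑ ij ∈ antidiagonal n, (n.choose ij.1 : R) * (u ^ ij.1 * v ^ ij.2 *
    if x = (ij.2 : ℤ) - ij.1 then 1 else 0)

theorem binomialWalk_zero (u v : R) (x : ℤ) :
    binomialWalk u v 0 x = if x = 0 then 1 else 0 := by
  simp [binomialWalk]

theorem binomialWalk_succ (u v : R) (n : ℕ) (x : ℤ) :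
    binomialWalk u v (n + 1) x =
      u * binomialWalk u v n (x + 1) + v * binomialWalk u v n (x - 1) := by
  rw [binomialWalk, sum_antidiagonal_choose_succ_mul
      (fun i k => u ^ i * v ^ k * if x = (k : ℤ) - i then 1 else 0),
    add_comm, binomialWalk, binomialWalk, mul_sum, mul_sum]
  congr 1 <;> refine sum_congr rfl fun ij hij => ?_
  · rw [Nat.choose_symm_of_eq_add (mem_antidiagonal.mp hij).symm]
    simp only [Nat.cast_add, Nat.cast_one, pow_succ,
      show x = ij.2 - (ij.1 + 1) ↔ x + 1 = ij.2 - ij.1 by omega]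
    ring
  · simp only [Nat.cast_add, Nat.cast_one, pow_succ,
      show x = ij.2 + 1 - ij.1 ↔ x - 1 = ij.2 - ij.1 by omega]
    ring

theorem binomialWalk_eq_sum_range (u v : R) (n : ℕ) (x : ℤ) :
    binomialWalk u v n x = ∑ j ∈ range (n + 1),
      (n.choose j : R) * u ^ j * v ^ (n - j) * if x = (n : ℤ) - 2 * j then 1 else 0 := by
  rw [binomialWalk, Nat.sum_antidiagonal_eq_sum_range_succ_mk]
  refine sum_congr rfl fun j hj => ?_
  have hjn : j ≤ n := Nat.lt_succ_iff.mp (mem_range.mp hj)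
  simp only [mul_assoc, show x = ((n - j : ℕ) : ℤ) - j ↔ x = n - 2 * j by omega]

end BinomialWalk

section Example3

variable (s g t : ℂ) (ρ₀ : Matrix (Fin 2) (Fin 2) ℂ)

theorem oqrwState_succ_zero_zero (n : ℕ) (x : ℤ) :
    oqrwState !![1, 0; 0, s] !![0, g; 0, t] ρ₀ (n + 1) x 0 0 =
      oqrwState !![1, 0; 0, s] !![0, g; 0, t] ρ₀ n (x + 1) 0 0 +
        Complex.normSq g * oqrwState !![1, 0; 0, s] !![0, g; 0, t] ρ₀ n (x - 1) 1 1 := by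
  simp only [oqrwState, Matrix.add_apply, mul_apply, Fin.sum_univ_two, conjTranspose_apply,
    of_apply, cons_val', cons_val_zero, cons_val_one, cons_val_fin_one, RCLike.star_def, map_zero,
    map_one, ← Complex.mul_conj]
  ring

theorem oqrwState_succ_one_one (n : ℕ) (x : ℤ) :
    oqrwState !![1, 0; 0, s] !![0, g; 0, t] ρ₀ (n + 1) x 1 1 =
      Complex.normSq s * oqrwState !![1, 0; 0, s] !![0, g; 0, t] ρ₀ n (x + 1) 1 1 +
        Complex.normSq t * oqrwState !![1, 0; 0, s] !![0, g; 0, t] ρ₀ n (x - 1) 1 1 := by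
  simp only [oqrwState, Matrix.add_apply, mul_apply, Fin.sum_univ_two, conjTranspose_apply,
    of_apply, cons_val', cons_val_zero, cons_val_one, cons_val_fin_one, RCLike.star_def, map_zero,
    ← Complex.mul_conj]
  ring

theorem oqrwState_one_one (n : ℕ) (x : ℤ) :
    oqrwState !![1, 0; 0, s] !![0, g; 0, t] ρ₀ n x 1 1 =
      ρ₀ 1 1 * binomialWalk (Complex.normSq s : ℂ) (Complex.normSq t) n x := by
  induction n generalizing x with
  | zero => by_cases hx : x = 0 <;> simp [oqrwState, binomialWalk_zero, hx]
  | succ n ih =>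
    rw [oqrwState_succ_one_one, ih, ih, binomialWalk_succ]
    ring

theorem oqrwState_zero_zero (n : ℕ) (x : ℤ) :
    oqrwState !![1, 0; 0, s] !![0, g; 0, t] ρ₀ n x 0 0 =
      (if x + n = 0 then ρ₀ 0 0 else 0) + ∑ j ∈ range n,
        Complex.normSq g * ρ₀ 1 1 * binomialWalk (Complex.normSq s : ℂ) (Complex.normSq t) j
          (x + n - j - 2) := by
  rw [eq_add_sum_of_succ_eq_shift_add
    (f := fun n x => oqrwState !![1, 0; 0, s] !![0, g; 0, t] ρ₀ n x 0 0)
    (h := fun n x => Complex.normSq g * oqrwState !![1, 0; 0, s] !![0, g; 0, t] ρ₀ n x 1 1)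
    (oqrwState_succ_zero_zero s g t ρ₀) n x]
  simp only [oqrwState, oqrwState_one_one, mul_assoc]
  split_ifs <;> rfl

end Example3

theorem oqrw_example3_distribution_general (p q γ a b : ℝ)
    (hγ : 0 < γ) (hγ' : γ ≤ min (Real.sqrt (2 * p)) (Real.sqrt (2 * q)))
    (n : ℕ) (x : ℤ) :
    (oqrwState !![(1 : ℂ), 0; 0, (Real.sqrt (p - γ ^ 2 / 2) : ℂ)]
        !![(0 : ℂ), (γ : ℂ); 0, (Real.sqrt (q - γ ^ 2 / 2) : ℂ)]
        !![(a : ℂ), 0; 0, (b : ℂ)] n x).trace =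
      (a : ℂ) * (if x = -(n : ℤ) then 1 else 0) +
        (b : ℂ) * (γ : ℂ) ^ 2 * ∑ j ∈ Finset.range n, ∑ l ∈ Finset.range (j + 1),
          (j.choose l : ℂ) * ((p - γ ^ 2 / 2 : ℝ) : ℂ) ^ l *
            ((q - γ ^ 2 / 2 : ℝ) : ℂ) ^ (j - l) *
            (if x = 2 * ((j : ℤ) - l + 1) - n then 1 else 0) +
        (b : ℂ) * ∑ j ∈ Finset.range (n + 1),
          (n.choose j : ℂ) * ((p - γ ^ 2 / 2 : ℝ) : ℂ) ^ j *
            ((q - γ ^ 2 / 2 : ℝ) : ℂ) ^ (n - j) *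
            (if x = (n : ℤ) - 2 * j then 1 else 0) := by
  have normSq_sqrt {r : ℝ} (hr : γ ≤ √(2 * r)) :
      Complex.normSq (√(r - γ ^ 2 / 2) : ℂ) = r - γ ^ 2 / 2 := by
    rw [Complex.normSq_ofReal, Real.mul_self_sqrt]
    linarith [(Real.le_sqrt' hγ).mp hr]
  have shifted_walk (u v : ℂ) (j : ℕ) : binomialWalk u v j (x + n - j - 2) =
      ∑ l ∈ range (j + 1), (j.choose l : ℂ) * u ^ l * v ^ (j - l) *
        if x = 2 * ((j : ℤ) - l + 1) - n then 1 else 0 := by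
    rw [binomialWalk_eq_sum_range]
    refine sum_congr rfl fun l _ => ?_
    simp only [show x + n - j - 2 = (j : ℤ) - 2 * l ↔ x = 2 * ((j : ℤ) - l + 1) - n by omega]
  rw [trace_fin_two, oqrwState_zero_zero, oqrwState_one_one, binomialWalk_eq_sum_range,
    normSq_sqrt (hγ'.trans (min_le_left _ _)), normSq_sqrt (hγ'.trans (min_le_right _ _)),
    Complex.normSq_ofReal]
  simp only [of_apply, cons_val', cons_val_zero, cons_val_one, empty_val', cons_val_fin_one,
    shifted_walk, ← mul_sum, mul_ite, mul_one, mul_zero, show x + n = 0 ↔ x = -n by omega]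
  push_cast
  ring

/-- Example 3: the distribution of the OQRW generated by
`B = [[1,0],[0,√(p-γ²/2)]]`, `C = [[0,γ],[0,√(q-γ²/2)]]`, started at
`ρ₀ = [[a,0],[0,b]]`, is
`p_x^{(n)} = a δ_{x,-n} + b γ² Σ_{j=0}^{n-1} Σ_{l=0}^{j} C(j,l) p̃^l q̃^{j-l} δ_{x,2(j-l+1)-n}`
`+ b Σ_{j=0}^{n} C(n,j) p̃^j q̃^{n-j} δ_{x,n-2j}`. -/
theorem oqrw_example3_distribution (p q γ a b : ℝ)
    (hpq : p + q = 1) (hp : p ∈ Set.Icc (0:ℝ) 1) (hq : q ∈ Set.Icc (0:ℝ) 1)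
    (hγ : 0 < γ) (hγ' : γ ≤ min (Real.sqrt (2 * p)) (Real.sqrt (2 * q)))
    (ha : 0 ≤ a) (hb : 0 ≤ b) (hab : a + b = 1)
    (n : ℕ) (hn : 1 ≤ n) (x : ℤ) :
    (oqrwState !![(1 : ℂ), 0; 0, (Real.sqrt (p - γ ^ 2 / 2) : ℂ)]
        !![(0 : ℂ), (γ : ℂ); 0, (Real.sqrt (q - γ ^ 2 / 2) : ℂ)]
        !![(a : ℂ), 0; 0, (b : ℂ)] n x).trace =
      (a : ℂ) * (if x = -(n : ℤ) then 1 else 0) +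
        (b : ℂ) * (γ : ℂ) ^ 2 * ∑ j ∈ Finset.range n, ∑ l ∈ Finset.range (j + 1),
          (j.choose l : ℂ) * ((p - γ ^ 2 / 2 : ℝ) : ℂ) ^ l *
            ((q - γ ^ 2 / 2 : ℝ) : ℂ) ^ (j - l) *
            (if x = 2 * ((j : ℤ) - l + 1) - n then 1 else 0) +
        (b : ℂ) * ∑ j ∈ Finset.range (n + 1),
          (n.choose j : ℂ) * ((p - γ ^ 2 / 2 : ℝ) : ℂ) ^ j *
            ((q - γ ^ 2 / 2 : ℝ) : ℂ) ^ (n - j) *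
            (if x = (n : ℤ) - 2 * j then 1 else 0) :=
  oqrw_example3_distribution_general p q γ a b hγ hγ' n x
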